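/- For all tensors A, B ∈ ℂ^{n1×n2×n3}, |⟨A, B⟩| ≤ ‖A‖ · ‖B‖_TTNN, i.e. the tensor spectral norm and the transformed tensor nuclear norm are dual to each other with respect to the entrywise inner product. -/

import Mathlib

open scoped BigOperators ComplexConjugate
open MeasureTheory Matrix

noncomputable section

/-- A third-order complex tensor. -/
abbrev Tensor (n1 n2 n3 : ℕ) : Type := Fin n1 → Fin n2 → Fin n3 → ℂ

namespace Tensor

variable {n1 n2 n3 n4 r : ℕ}

/-- The `t`-th frontal slice of the transformed tensor `Φ[A]`. -/
def slice (Φ : Matrix (Fin n3) (Fin n3) ℂ) (A : Tensor n1 n2 n3) (t : Fin n3) :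
    Matrix (Fin n1) (Fin n2) ℂ :=
  Matrix.of fun i j => ∑ k, Φ t k * A i j k

/-- Reconstruct a tensor from its transformed frontal slices (inverse transform `Φᴴ[·]`). -/
def unslice (Φ : Matrix (Fin n3) (Fin n3) ℂ)
    (M : Fin n3 → Matrix (Fin n1) (Fin n2) ℂ) : Tensor n1 n2 n3 :=
  fun i j k => ∑ t, (starRingEnd ℂ) (Φ t k) * M t i j

/-- The Φ-product `A ⋄ B`. -/
def tprod (Φ : Matrix (Fin n3) (Fin n3) ℂ) (A : Tensor n1 n2 n3) (B : Tensor n2 n4 n3) :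
    Tensor n1 n4 n3 :=
  unslice Φ fun t => slice Φ A t * slice Φ B t

/-- The conjugate transpose `Aᴴ` with respect to `Φ`. -/
def tconj (Φ : Matrix (Fin n3) (Fin n3) ℂ) (A : Tensor n1 n2 n3) : Tensor n2 n1 n3 :=
  unslice Φ fun t => (slice Φ A t)ᴴ

/-- Frobenius norm of a tensor. -/
def frob (A : Tensor n1 n2 n3) : ℝ :=
  Real.sqrt (∑ i, ∑ j, ∑ k, Complex.normSq (A i j k))

/-- Entrywise inner product `⟨A, B⟩ = Σ conj(A) B`. -/
def tinner (A B : Tensor n1 n2 n3) : ℂ :=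
  ∑ i, ∑ j, ∑ k, (starRingEnd ℂ) (A i j k) * B i j k

/-- `‖A‖_∞`, the max modulus of the entries. -/
def inftyNorm (A : Tensor n1 n2 n3) : ℝ :=
  ⨆ i, ⨆ j, ⨆ k, ‖A i j k‖

/-- `‖A‖_{∞,2}`. -/
def infty2Norm (A : Tensor n1 n2 n3) : ℝ :=
  max (⨆ i : Fin n1, Real.sqrt (∑ b, ∑ k, Complex.normSq (A i b k)))
      (⨆ j : Fin n2, Real.sqrt (∑ a, ∑ k, Complex.normSq (A a j k)))

/-- The weighted norm `‖A‖_{∞,w}` for a weight vector `w`. -/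
def inftyWNorm (w : Fin n3 → ℝ) (A : Tensor n1 n2 n3) : ℝ :=
  max (⨆ i : Fin n1, Real.sqrt (∑ b, ∑ k, (w k) ^ 2 * Complex.normSq (A i b k)))
      (⨆ j : Fin n2, Real.sqrt (∑ a, ∑ k, (w k) ^ 2 * Complex.normSq (A a j k)))

/-- Spectral norm of a complex matrix (ℓ²→ℓ² operator norm). -/
def specNormM {m n : ℕ} (M : Matrix (Fin m) (Fin n) ℂ) : ℝ :=
  ‖LinearMap.toContinuousLinearMap (Matrix.toEuclideanLin M)‖

/-- Nuclear norm of a complex matrix: the sum of its singular values. -/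
def nuclearNormM {m n : ℕ} (M : Matrix (Fin m) (Fin n) ℂ) : ℝ :=
  ∑ i, Real.sqrt ((Matrix.isHermitian_conjTranspose_mul_self M).eigenvalues i)

/-- Tensor spectral norm: max of spectral norms of transformed frontal slices. -/
def specNorm (Φ : Matrix (Fin n3) (Fin n3) ℂ) (A : Tensor n1 n2 n3) : ℝ :=
  ⨆ t, specNormM (slice Φ A t)

/-- Transformed tensor nuclear norm. -/
def ttnn (Φ : Matrix (Fin n3) (Fin n3) ℂ) (A : Tensor n1 n2 n3) : ℝ :=
  ∑ t, nuclearNormM (slice Φ A t)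

/-- The sampling projection `P_Ω`. -/
def projOmega (Ω : Set (Fin n1 × Fin n2 × Fin n3)) (A : Tensor n1 n2 n3) :
    Tensor n1 n2 n3 :=
  fun i j k => Ω.indicator (fun p => A p.1 p.2.1 p.2.2) (i, j, k)

/-- The column-basis tensor `e_ik ∈ ℂ^{n×1×n3}`. -/
def colBasis {n n3 : ℕ} (i : Fin n) (k : Fin n3) : Tensor n 1 n3 :=
  fun a _ c => if a = i ∧ c = k then 1 else 0

/-- The unit tensor `E_ijk`. -/
def unitTensor (i : Fin n1) (j : Fin n2) (k : Fin n3) : Tensor n1 n2 n3 :=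
  fun a b c => if a = i ∧ b = j ∧ c = k then 1 else 0

/-- The orthogonal projection `P_T` onto the subspace `T` determined by `U, V`. -/
def projT (Φ : Matrix (Fin n3) (Fin n3) ℂ) (U : Tensor n1 r n3) (V : Tensor n2 r n3)
    (X : Tensor n1 n2 n3) : Tensor n1 n2 n3 :=
  tprod Φ (tprod Φ U (tconj Φ U)) X + tprod Φ X (tprod Φ V (tconj Φ V))
    - tprod Φ (tprod Φ (tprod Φ U (tconj Φ U)) X) (tprod Φ V (tconj Φ V))

/-- `P_{T⊥}(X) = X - P_T(X)`. -/
def projTperp (Φ : Matrix (Fin n3) (Fin n3) ℂ) (U : Tensor n1 r n3) (V : Tensor n2 r n3)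
    (X : Tensor n1 n2 n3) : Tensor n1 n2 n3 :=
  X - projT Φ U V X

/-- Operator norm of a map on tensors, w.r.t. the Frobenius norm. -/
def opNorm (L : Tensor n1 n2 n3 → Tensor n1 n2 n3) : ℝ :=
  sSup ((fun X => frob (L X)) '' {X | frob X ≤ 1})

/-- A skinny transformed tensor SVD `Z = U ⋄ S ⋄ Vᴴ`. -/
structure SkinnySVD (Φ : Matrix (Fin n3) (Fin n3) ℂ) (Z : Tensor n1 n2 n3) (r : ℕ)
    (U : Tensor n1 r n3) (S : Tensor r r n3) (V : Tensor n2 r n3) : Prop where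
  factor : Z = tprod Φ (tprod Φ U S) (tconj Φ V)
  U_orth : ∀ t, (slice Φ U t)ᴴ * slice Φ U t = 1
  V_orth : ∀ t, (slice Φ V t)ᴴ * slice Φ V t = 1
  S_offdiag : ∀ t i j, i ≠ j → slice Φ S t i j = 0
  S_diag_real_nonneg : ∀ t i, (slice Φ S t i i).im = 0 ∧ 0 ≤ (slice Φ S t i i).re

/-- The tensor incoherence conditions with parameter μ. -/
def Incoherent (Φ : Matrix (Fin n3) (Fin n3) ℂ) (Z : Tensor n1 n2 n3)
    (U : Tensor n1 r n3) (V : Tensor n2 r n3) (μ : ℝ) : Prop :=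
  (∀ (i : Fin n1) (k : Fin n3),
      (frob (tprod Φ (tconj Φ U) (colBasis i k))) ^ 2
        ≤ μ * (∑ t, ((slice Φ Z t).rank : ℝ)) / (n1 * n3)) ∧
  (∀ (j : Fin n2) (k : Fin n3),
      (frob (tprod Φ (tconj Φ V) (colBasis j k))) ^ 2
        ≤ μ * (∑ t, ((slice Φ Z t).rank : ℝ)) / (n2 * n3))

/-- Bernoulli measure on `Bool` with success probability ρ. -/
def berMeasure (ρ : ℝ) : Measure Bool :=
  ρ.toNNReal • Measure.dirac true + (1 - ρ).toNNReal • Measure.dirac false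

instance (ρ : ℝ) : IsFiniteMeasure (berMeasure ρ) := by
  unfold berMeasure; infer_instance

/-- The i.i.d. Bernoulli sampling model `Ω ~ Ber(ρ)`. -/
def berPi (n1 n2 n3 : ℕ) (ρ : ℝ) : Measure ((Fin n1 × Fin n2 × Fin n3) → Bool) :=
  Measure.pi fun _ => berMeasure ρ

/-- The random set `Ω` determined by a Bernoulli sample. -/
def omegaSet {n1 n2 n3 : ℕ} (ω : (Fin n1 × Fin n2 × Fin n3) → Bool) :
    Set (Fin n1 × Fin n2 × Fin n3) := {p | ω p = true}

end Tensor

open Tensor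

/-!
Since `Φ` is unitary it preserves the inner product of every tube, so `⟨A, B⟩` splits as the sum
over `t` of the matrix inner products `tr ((Φ[A]⁽ᵗ⁾)ᴴ Φ[B]⁽ᵗ⁾)`. For each slice one computes the
trace `tr (Mᴴ N) = Σ ⟪M vₛ, N vₛ⟫` in an orthonormal eigenbasis `vₛ` of `Nᴴ N`; there
`‖N vₛ‖ = σₛ(N)` and `‖M vₛ‖ ≤ ‖M‖`, which gives `|tr (Mᴴ N)| ≤ ‖M‖ ‖N‖_*`.
-/

open scoped InnerProductSpace

namespace Matrix

theorem star_mulVec_dotProduct_mulVec_of_mem_unitaryGroup {R n : Type*} [CommRing R]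
    [StarRing R] [Fintype n] [DecidableEq n] {U : Matrix n n R}
    (hU : U ∈ unitaryGroup n R) (x y : n → R) :
    star (U *ᵥ x) ⬝ᵥ (U *ᵥ y) = star x ⬝ᵥ y := by
  rw [star_mulVec, ← dotProduct_mulVec, mulVec_mulVec, ← star_eq_conjTranspose,
    mem_unitaryGroup_iff'.mp hU, one_mulVec]

variable {𝕜 ι m n : Type*} [RCLike 𝕜] [Fintype ι] [Fintype m] [Fintype n]

theorem trace_conjTranspose_mul_eq_sum (A B : Matrix m n 𝕜) :
    (Aᴴ * B).trace = ∑ i, ∑ j, star (A i j) * B i j := by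
  rw [trace, Finset.sum_comm]
  simp [mul_apply]

theorem inner_toEuclideanLin_toEuclideanLin [DecidableEq n] (A B : Matrix m n 𝕜)
    (x y : EuclideanSpace 𝕜 n) :
    ⟪toEuclideanLin A x, toEuclideanLin B y⟫_𝕜 = ⟪x, toEuclideanLin (Aᴴ * B) y⟫_𝕜 := by
  classical
  rw [toLpLin_mul, LinearMap.comp_apply, toEuclideanLin_conjTranspose_eq_adjoint,
    LinearMap.adjoint_inner_right]

theorem trace_eq_sum_inner_toEuclideanLin [DecidableEq n] (A : Matrix n n 𝕜)
    (b : OrthonormalBasis ι 𝕜 (EuclideanSpace 𝕜 n)) :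
    A.trace = ∑ i, ⟪b i, toEuclideanLin A (b i)⟫_𝕜 := by
  rw [← LinearMap.trace_eq_sum_inner, toEuclideanLin_eq_toLin_orthonormal, trace_toLin_eq]

theorem trace_conjTranspose_mul_eq_sum_inner [DecidableEq n] (A B : Matrix m n 𝕜)
    (b : OrthonormalBasis ι 𝕜 (EuclideanSpace 𝕜 n)) :
    (Aᴴ * B).trace = ∑ i, ⟪toEuclideanLin A (b i), toEuclideanLin B (b i)⟫_𝕜 := by
  simp only [trace_eq_sum_inner_toEuclideanLin _ b, inner_toEuclideanLin_toEuclideanLin]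

theorem norm_toEuclideanLin_eigenvectorBasis [DecidableEq n] (B : Matrix m n 𝕜) (t : n) :
    ‖toEuclideanLin B ((isHermitian_conjTranspose_mul_self B).eigenvectorBasis t)‖
      = √((isHermitian_conjTranspose_mul_self B).eigenvalues t) := by
  set h := isHermitian_conjTranspose_mul_self B
  have heig : toEuclideanLin (Bᴴ * B) (h.eigenvectorBasis t)
      = (h.eigenvalues t : 𝕜) • h.eigenvectorBasis t := by
    rw [toLpLin_apply, h.mulVec_eigenvectorBasis, ← RCLike.real_smul_eq_coe_smul (K := 𝕜)]
    rfl
  rw [norm_eq_sqrt_re_inner (𝕜 := 𝕜), inner_toEuclideanLin_toEuclideanLin, heig, inner_smul_right,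
    inner_self_eq_norm_sq_to_K, h.eigenvectorBasis.orthonormal.1 t]
  simp

end Matrix

namespace Tensor

variable {n1 n2 n3 : ℕ}

theorem nuclearNormM_nonneg {m n : ℕ} (N : Matrix (Fin m) (Fin n) ℂ) : 0 ≤ nuclearNormM N :=
  Finset.sum_nonneg fun _ _ => Real.sqrt_nonneg _

theorem norm_toEuclideanLin_le_specNormM {m n : ℕ} (M : Matrix (Fin m) (Fin n) ℂ)
    (x : EuclideanSpace ℂ (Fin n)) : ‖Matrix.toEuclideanLin M x‖ ≤ specNormM M * ‖x‖ :=
  (LinearMap.toContinuousLinearMap (Matrix.toEuclideanLin M)).le_opNorm x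

theorem norm_trace_conjTranspose_mul_le {m n : ℕ} (M N : Matrix (Fin m) (Fin n) ℂ) :
    ‖(Mᴴ * N).trace‖ ≤ specNormM M * nuclearNormM N := by
  set h := Matrix.isHermitian_conjTranspose_mul_self N
  rw [Matrix.trace_conjTranspose_mul_eq_sum_inner M N h.eigenvectorBasis, nuclearNormM,
    Finset.mul_sum]
  refine (norm_sum_le _ _).trans (Finset.sum_le_sum fun t _ => ?_)
  calc _ ≤ ‖Matrix.toEuclideanLin M (h.eigenvectorBasis t)‖
        * ‖Matrix.toEuclideanLin N (h.eigenvectorBasis t)‖ := norm_inner_le_norm _ _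
    _ ≤ specNormM M * √(h.eigenvalues t) := by
      rw [Matrix.norm_toEuclideanLin_eigenvectorBasis]
      gcongr
      simpa [h.eigenvectorBasis.orthonormal.1 t] using
        norm_toEuclideanLin_le_specNormM M (h.eigenvectorBasis t)

theorem tinner_eq_sum_trace_slice {Φ : Matrix (Fin n3) (Fin n3) ℂ}
    (hΦ : Φ ∈ Matrix.unitaryGroup (Fin n3) ℂ) (A B : Tensor n1 n2 n3) :
    tinner A B = ∑ t, ((slice Φ A t)ᴴ * slice Φ B t).trace := by
  simp_rw [Matrix.trace_conjTranspose_mul_eq_sum, Finset.sum_comm (γ := Fin n3)]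
  refine Finset.sum_congr rfl fun i _ => Finset.sum_congr rfl fun j _ => ?_
  simpa [dotProduct, slice, Matrix.mulVec] using
    (Matrix.star_mulVec_dotProduct_mulVec_of_mem_unitaryGroup hΦ (A i j) (B i j)).symm

theorem specNormM_slice_le_specNorm (Φ : Matrix (Fin n3) (Fin n3) ℂ) (A : Tensor n1 n2 n3)
    (t : Fin n3) : specNormM (slice Φ A t) ≤ specNorm Φ A :=
  le_ciSup (f := fun s => specNormM (slice Φ A s)) (Set.finite_range _).bddAbove t

end Tensor

/-- duality between the tensor spectral norm and the TTNN. -/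
theorem statement16 {n1 n2 n3 : ℕ} (Φ : Matrix (Fin n3) (Fin n3) ℂ)
    (hΦ : Φ ∈ Matrix.unitaryGroup (Fin n3) ℂ) :
    ∀ A B : Tensor n1 n2 n3,
      ‖tinner A B‖ ≤ specNorm Φ A * ttnn Φ B := by
  intro A B
  rw [tinner_eq_sum_trace_slice hΦ, ttnn, Finset.mul_sum]
  refine (norm_sum_le _ _).trans (Finset.sum_le_sum fun t _ => ?_)
  calc _ ≤ specNormM (slice Φ A t) * nuclearNormM (slice Φ B t) :=
        norm_trace_conjTranspose_mul_le _ _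
    _ ≤ specNorm Φ A * nuclearNormM (slice Φ B t) :=
        mul_le_mul_of_nonneg_right (specNormM_slice_le_specNorm Φ A t) (nuclearNormM_nonneg _)
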